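/- Let C_r be a connected component of G_P, let J_r^max = ⋃_{J' ∈ V(C_r)} J', and let J be a connected order ideal of P such that the induced subgraph χ_J is a subgraph of C_r. If J ≠ J_r^max, then J is a vertex of C_r. -/

import Mathlib

attribute [local instance] Classical.propDecidable

noncomputable section

open Finset

variable {n : ℕ}

/-- The comparability graph of the poset structure `P` on `Fin n`; for an order
ideal of `P`, connectivity of its induced subgraph in this graph agrees with
connectivity of the Hasse diagram. -/
def compGraph (P : PartialOrder (Fin n)) : SimpleGraph (Fin n) where
  Adj i j := i ≠ j ∧ (P.le i j ∨ P.le j i)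
  symm := by
    constructor
    intro i j h
    exact ⟨h.1.symm, h.2.symm⟩
  loopless := by
    constructor
    intro i h
    exact h.1 rfl

/-- `J` is an order ideal of the poset `P`. -/
def IsIdeal (P : PartialOrder (Fin n)) (J : Finset (Fin n)) : Prop :=
  ∀ i ∈ J, ∀ j : Fin n, P.le j i → j ∈ J

/-- The Hasse diagram of `J` as a subposet of `P` is a connected graph. -/
def JConn (P : PartialOrder (Fin n)) (J : Finset (Fin n)) : Prop :=
  ((compGraph P).induce (↑J : Set (Fin n))).Connected

/-- `J` is a connected order ideal of `P`. -/
def IsConnIdeal (P : PartialOrder (Fin n)) (J : Finset (Fin n)) : Prop :=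
  IsIdeal P J ∧ JConn P J

/-- The type of connected order ideals of `P` (the vertices of `G_P`). -/
abbrev ConnIdeal (P : PartialOrder (Fin n)) : Type :=
  {J : Finset (Fin n) // IsConnIdeal P J}

instance (P : PartialOrder (Fin n)) : Fintype (ConnIdeal P) := Fintype.ofFinite _

/-- `A` and `B` intersect nontrivially. -/
def Nontriv (A B : Finset (Fin n)) : Prop :=
  (A ∩ B).Nonempty ∧ ¬ A ⊆ B ∧ ¬ B ⊆ A

/-- The graph `G_P` on the connected order ideals of `P`, with two ideals
adjacent iff they intersect nontrivially. -/
def GP (P : PartialOrder (Fin n)) : SimpleGraph (ConnIdeal P) where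
  Adj A B := Nontriv A.1 B.1
  symm := by
    constructor
    intro A B h
    exact ⟨by rw [Finset.inter_comm]; exact h.1, h.2.2, h.2.1⟩
  loopless := by
    constructor
    intro A h
    exact h.2.1 (Finset.Subset.refl _)

instance (P : PartialOrder (Fin n)) : Fintype ((GP P).ConnectedComponent) :=
  Fintype.ofFinite _

instance (P : PartialOrder (Fin n)) : Fintype ((GP P).edgeSet) :=
  Fintype.ofFinite _

/-- `s` is an independent set of the graph `G`. -/
def IsIndep {V : Type*} (G : SimpleGraph V) (s : Finset V) : Prop :=
  ∀ a ∈ s, ∀ b ∈ s, ¬ G.Adj a b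

/-- `s` is a maximum independent set of the graph `G`. -/
def IsMaxIndep {V : Type*} (G : SimpleGraph V) (s : Finset V) : Prop :=
  IsIndep G s ∧ ∀ t : Finset V, IsIndep G t → t.card ≤ s.card

/-- `s` is a maximum independent set of the subgraph of `G` induced on the
vertex set `S` (e.g. on a connected component of `G`). -/
def IsMaxIndepOn {V : Type*} (G : SimpleGraph V) (S : Set V) (s : Finset V) : Prop :=
  ↑s ⊆ S ∧ IsIndep G s ∧ ∀ t : Finset V, ↑t ⊆ S → IsIndep G t → t.card ≤ s.card

/-- `μ(M, J) = ⋃_{J' ∈ M, J' ⊊ J} J'`. -/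
def mu (P : PartialOrder (Fin n)) (M : Finset (ConnIdeal P)) (J : Finset (Fin n)) :
    Finset (Fin n) :=
  (M.filter (fun J' => J'.1 ⊂ J)).biUnion (fun J' => J'.1)

/-- The strict order relation of the poset `F_M` associated with a maximum
independent set `M` of `G_P`: `i <_{F_M} j` iff `J_a ⊊ J_b` where `J_a, J_b ∈ M`
satisfy `J_a \ μ(M,J_a) = {i}` and `J_b \ μ(M,J_b) = {j}`. -/
def FMlt (P : PartialOrder (Fin n)) (M : Finset (ConnIdeal P)) (i j : Fin n) : Prop :=
  ∃ Ja ∈ M, ∃ Jb ∈ M,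
    Ja.1 \ mu P M Ja.1 = {i} ∧ Jb.1 \ mu P M Jb.1 = {j} ∧ Ja.1 ⊂ Jb.1

/-- The order relation of the poset `F_M`. -/
def FMle (P : PartialOrder (Fin n)) (M : Finset (ConnIdeal P)) (i j : Fin n) : Prop :=
  i = j ∨ FMlt P M i j

/-- Strict relation associated with the relation `le`. -/
def ltRel (le : Fin n → Fin n → Prop) (i j : Fin n) : Prop := le i j ∧ i ≠ j

/-- `j` covers `i` in the order given by the relation `le`. -/
def CovRel (le : Fin n → Fin n → Prop) (i j : Fin n) : Prop :=
  ltRel le i j ∧ ∀ k : Fin n, ltRel le i k → ¬ ltRel le k j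

/-- The principal order ideal `Λ_i = {j : j ≤ i}` of the order given by `le`. -/
def LamRel (le : Fin n → Fin n → Prop) (i : Fin n) : Finset (Fin n) :=
  Finset.univ.filter (fun j => le j i)

/-- The descent set of a forest order given by the relation `le`:
elements `i` whose parent (the element covering `i`) is smaller than `i`. -/
def DesRel (le : Fin n → Fin n → Prop) : Finset (Fin n) :=
  Finset.univ.filter (fun i => ∃ j : Fin n, CovRel le i j ∧ j < i)

/-- `Des(M) = Des(F_M)`. -/
def DesM (P : PartialOrder (Fin n)) (M : Finset (ConnIdeal P)) : Finset (Fin n) :=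
  DesRel (FMle P M)

/-- `Des(M_r, M)`. -/
def DesMr (P : PartialOrder (Fin n)) (Mr M : Finset (ConnIdeal P)) : Finset (Fin n) :=
  (DesM P M).filter (fun i => ∃ J ∈ Mr, J.1 \ mu P M J.1 = {i})

/-- `Des̄(M_r, M)`. -/
def DesBarMr (P : PartialOrder (Fin n)) (Mr M : Finset (ConnIdeal P)) :
    Finset (ConnIdeal P) :=
  Mr.filter (fun J => ∃ i ∈ DesMr P Mr M, J.1 \ mu P M J.1 = {i})

/-- The relation `le` is (the order relation of) a `P`-forest: a partial order
whose Hasse diagram is a forest, all of whose principal order ideals are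
connected order ideals of `P`, and such that for incomparable `i, j` the union
`Λ_i ∪ Λ_j` is a disconnected order ideal of `P`. -/
structure IsPForestRel (P : PartialOrder (Fin n)) (le : Fin n → Fin n → Prop) : Prop where
  refl : ∀ i, le i i
  trans : ∀ i j k, le i j → le j k → le i k
  antisymm : ∀ i j, le i j → le j i → i = j
  forest : ∀ i j k, CovRel le i j → CovRel le i k → j = k
  connIdeal : ∀ i, IsConnIdeal P (LamRel le i)
  disc : ∀ i j : Fin n, ¬ le i j → ¬ le j i →
    IsIdeal P (LamRel le i ∪ LamRel le j) ∧ ¬ JConn P (LamRel le i ∪ LamRel le j)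

/-- The principal order ideal `Λ_i^P` of `P`. -/
def PIdeal (P : PartialOrder (Fin n)) (i : Fin n) : Finset (Fin n) :=
  Finset.univ.filter (fun k => P.le k i)

/-- The generating set `gs(J)`: the maximal elements of `J` with respect to `P`. -/
def gsJ (P : PartialOrder (Fin n)) (J : Finset (Fin n)) : Finset (Fin n) :=
  J.filter (fun i => ∀ j ∈ J, ¬ P.lt i j)

/-- `P` is naturally labeled. -/
def NatLabeled (P : PartialOrder (Fin n)) : Prop :=
  ∀ i j : Fin n, P.lt i j → i < j

/-- `U_max(M, J)`: the maximal members of `U(M,J) = {J' ∈ M : J' ⊊ J}`. -/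
def Umax (P : PartialOrder (Fin n)) (M : Finset (ConnIdeal P)) (J : Finset (Fin n)) :
    Finset (ConnIdeal P) :=
  (M.filter (fun Ja => Ja.1 ⊂ J)).filter
    (fun Ja => ∀ Jb ∈ M, Jb.1 ⊂ J → Jb ≠ Ja → ¬ Ja.1 ⊂ Jb.1)

/-- The set of vertices of `G_P` which are principal order ideals of `P`. -/
def PIdealSet (P : PartialOrder (Fin n)) : Set (ConnIdeal P) :=
  {A : ConnIdeal P | ∃ i : Fin n, A.1 = PIdeal P i}

/-- The graph `H_P`: the subgraph of `G_P` induced by the principal order ideals. -/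
def HP (P : PartialOrder (Fin n)) : SimpleGraph (PIdealSet P) :=
  (GP P).induce (PIdealSet P)

/-- `f` is a `P`-partition. -/
def IsPPartition (P : PartialOrder (Fin n)) (f : Fin n → ℕ) : Prop :=
  (∀ i j : Fin n, P.lt i j → f j ≤ f i) ∧
  (∀ i j : Fin n, P.lt i j → j < i → f j < f i)

/-- The monomial `∏_{k ∈ J} x_k`. -/
def xJ (J : Finset (Fin n)) : MvPowerSeries (Fin n) ℚ :=
  ∏ k ∈ J, MvPowerSeries.X k

/-- The set of linear extensions of `P`, viewed as permutations `w` of `Fin n`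
(in positions `0, …, n-1`) such that `i < j` whenever `w i <_P w j`. -/
def LinExts (P : PartialOrder (Fin n)) : Finset (Equiv.Perm (Fin n)) :=
  Finset.univ.filter (fun w => ∀ i j : Fin n, P.lt (w i) (w j) → i < j)

/-- The major index of a permutation (with 1-indexed positions). -/
def maj (w : Equiv.Perm (Fin n)) : ℕ :=
  ∑ i ∈ Finset.univ.filter
      (fun i : Fin n => ∃ h : (i : ℕ) + 1 < n, w ⟨(i : ℕ) + 1, h⟩ < w i),
    ((i : ℕ) + 1)

/-- The finset of maximum independent sets of the connected component `c` of `G_P`. -/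
def MaxIndepsOn (P : PartialOrder (Fin n)) (c : (GP P).ConnectedComponent) :
    Finset (Finset (ConnIdeal P)) :=
  Finset.univ.filter (fun Mr : Finset (ConnIdeal P) => IsMaxIndepOn (GP P) c.supp Mr)

/-!
Every element of `J` lies below a maximal element `m` of `J`, and `Λ_m ⊆ J` is a vertex of `C`;
hence `J ⊆ J^max`, and `J ≠ J^max` yields a vertex `A` of `C` with `A ⊄ J`. A walk in `C` from
`A` to some `Λ_m ⊆ J` has a first step `D → D'` with `D ⊄ J` and `D' ⊆ J`. Then `D` meets `J`
(it meets `D'`), and `J ⊄ D` (else `D' ⊆ D`), so `D` and `J` are adjacent in `G_P`.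
-/

section

variable (P : PartialOrder (Fin n))

@[simp]
lemma mem_pIdeal {i k : Fin n} : k ∈ PIdeal P i ↔ P.le k i := by
  simp [PIdeal]

lemma isConnIdeal_pIdeal (i : Fin n) : IsConnIdeal P (PIdeal P i) := by
  refine ⟨fun x hx j hj => (mem_pIdeal P).2 (P.le_trans _ _ _ hj ((mem_pIdeal P).1 hx)), ?_⟩
  have hi : i ∈ (↑(PIdeal P i) : Set (Fin n)) := (mem_pIdeal P).2 (P.le_refl i)
  -- every vertex of `Λ_i` is equal or adjacent to `i`
  have toTop : ∀ w : (↑(PIdeal P i) : Set (Fin n)),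
      ((compGraph P).induce (↑(PIdeal P i) : Set (Fin n))).Reachable w ⟨i, hi⟩ := by
    intro w
    by_cases hw : w.1 = i
    · rw [show w = ⟨i, hi⟩ from Subtype.ext hw]
    · exact SimpleGraph.Adj.reachable ⟨hw, Or.inl ((mem_pIdeal P).1 w.2)⟩
  exact (SimpleGraph.connected_iff _).2 ⟨fun u v => (toTop u).trans (toTop v).symm, ⟨⟨i, hi⟩⟩⟩

def pIdealVertex (i : Fin n) : ConnIdeal P := ⟨PIdeal P i, isConnIdeal_pIdeal P i⟩

lemma pIdeal_subset {J : Finset (Fin n)} (hJ : IsIdeal P J) {i : Fin n} (hi : i ∈ J) :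
    PIdeal P i ⊆ J :=
  fun k hk => hJ i hi k ((mem_pIdeal P).1 hk)

lemma exists_mem_gsJ_le {J : Finset (Fin n)} {j : Fin n} (hj : j ∈ J) :
    ∃ m ∈ gsJ P J, P.le j m := by
  -- shadows the standard order of `Fin n`
  let _ : PartialOrder (Fin n) := P
  obtain ⟨m, hjm, hm, hmax⟩ := J.exists_le_maximal hj
  exact ⟨m, mem_filter.2 ⟨hm, fun x hx hlt => hlt.not_ge (hmax hx hlt.le)⟩, hjm⟩

variable {P}

lemma adj_of_adj_of_subset {J : ConnIdeal P} {D D' : ConnIdeal P} (h : (GP P).Adj D D')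
    (hD : ¬ D.1 ⊆ J.1) (hD' : D'.1 ⊆ J.1) : (GP P).Adj D J := by
  obtain ⟨⟨x, hx⟩, _, hD'D⟩ := h
  rw [mem_inter] at hx
  exact ⟨⟨x, mem_inter.2 ⟨hx.1, hD' hx.2⟩⟩, hD, fun hJD => hD'D (hD'.trans hJD)⟩

lemma reachable_of_reachable_of_subset {J A B : ConnIdeal P} (hAB : (GP P).Reachable A B)
    (hA : ¬ A.1 ⊆ J.1) (hB : B.1 ⊆ J.1) : (GP P).Reachable A J := by
  obtain ⟨w⟩ := hAB
  obtain ⟨d, hd, hdA, hdB⟩ :=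
    w.exists_boundary_dart {D | ¬ D.1 ⊆ J.1} hA (by simpa using hB)
  have hAd : (GP P).Reachable A d.fst :=
    ⟨w.takeUntil _ (w.dart_fst_mem_support_of_mem_darts hd)⟩
  exact hAd.trans (adj_of_adj_of_subset d.adj hdA (by simpa using hdB)).reachable

end

/-- Lemma 3.4(2): let `C` be a connected component of `G_P`
and `J` a connected order ideal of `P` such that `χ_J` is a subgraph of `C`.
If `J ≠ J^max = ⋃_{J' ∈ V(C)} J'`, then `J` is a vertex of `C`. -/
theorem statement_14 (n : ℕ) (P : PartialOrder (Fin n))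
    (c : (GP P).ConnectedComponent) (J : ConnIdeal P)
    (hchi : ∀ A : ConnIdeal P, (∃ i ∈ gsJ P J.1, A.1 = PIdeal P i) →
      (GP P).connectedComponentMk A = c)
    (hne : J.1 ≠ Finset.univ.filter
      (fun k : Fin n => ∃ A : ConnIdeal P,
        (GP P).connectedComponentMk A = c ∧ k ∈ A.1)) :
    (GP P).connectedComponentMk J = c := by
  have hgs : ∀ m ∈ gsJ P J.1, (GP P).connectedComponentMk (pIdealVertex P m) = c :=
    fun m hm => hchi _ ⟨m, hm, rfl⟩
  have hJmax : J.1 ⊆ univ.filter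
      (fun k => ∃ A : ConnIdeal P, (GP P).connectedComponentMk A = c ∧ k ∈ A.1) := by
    intro j hj
    obtain ⟨m, hm, hjm⟩ := exists_mem_gsJ_le P hj
    exact mem_filter.2 ⟨mem_univ _, _, hgs m hm, (mem_pIdeal P).2 hjm⟩
  obtain ⟨k, hk, hkJ⟩ := exists_of_ssubset (hJmax.ssubset_of_ne hne)
  obtain ⟨A, hAc, hkA⟩ := (mem_filter.1 hk).2
  obtain ⟨⟨j, hj⟩⟩ := J.2.2.nonempty
  obtain ⟨m, hm, -⟩ := exists_mem_gsJ_le P hj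
  have hAm : (GP P).Reachable A (pIdealVertex P m) :=
    SimpleGraph.ConnectedComponent.eq.1 (hAc.trans (hgs m hm).symm)
  have hAJ := reachable_of_reachable_of_subset hAm (fun h => hkJ (h hkA))
    (pIdeal_subset P J.2.1 (mem_filter.1 hm).1)
  rw [← hAc]
  exact SimpleGraph.ConnectedComponent.eq.2 hAJ.symm
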